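/- Let P_D = (1/2)·N(−3,1) + (1/2)·N(3,1) and, for θ = (θ₁, θ₂) ∈ ℝ², let P_θ = (1/2)·N(θ₁,1) + (1/2)·N(θ₂,1). Let φ_μ(x) = (2π)^{−1/2} exp(−(x−μ)²/2) denote the density of N(μ,1). Then: (i) for each θ, the map φ ↦ ∫ log φ_φ(x) dP_θ(x) attains a unique global maximum at φ*(θ) = (θ₁+θ₂)/2; (ii) the resulting upper-level objective θ ↦ ∫ log φ_{φ*(θ)}(x) dP_D(x) attains its global maximum exactly at those θ with θ₁ + θ₂ = 0. -/

import Mathlib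

/-! For a probability measure `P` on `ℝ` with finite second moment and mean `m`, the expected
log-likelihood of `N(c,1)` is a concave quadratic in `c` with vertex at `m`:
`∫ log φ_c dP = ∫ log φ_m dP − (c − m)² / 2`. The mixture `P_θ` has mean `(θ₁ + θ₂) / 2`, which
gives (i), and `P_D` has mean `0`, so the upper-level objective is
`∫ log φ_0 dP_D − ((θ₁ + θ₂) / 2)² / 2`, which gives (ii). -/

open MeasureTheory ProbabilityTheory
open scoped ENNReal

/-- The mixture `(1/2)·N(θ₁,1) + (1/2)·N(θ₂,1)` of two unit-variance Gaussians. -/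
noncomputable def gaussMix (θ₁ θ₂ : ℝ) : Measure ℝ :=
  (2 : ℝ≥0∞)⁻¹ • gaussianReal θ₁ 1 + (2 : ℝ≥0∞)⁻¹ • gaussianReal θ₂ 1

/-- The expected log-likelihood `∫ log φ_c dP` of the unit-variance Gaussian density
`φ_c(x) = (2π)^(−1/2) exp(−(x−c)²/2)` under the distribution `P`. -/
noncomputable def gaussLogLik (c : ℝ) (P : Measure ℝ) : ℝ :=
  ∫ x, Real.log ((Real.sqrt (2 * Real.pi))⁻¹ * Real.exp (-(x - c) ^ 2 / 2)) ∂P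

open Real

lemma log_gaussianDensity (c x : ℝ) :
    log ((√(2 * π))⁻¹ * exp (-(x - c) ^ 2 / 2)) = log (√(2 * π))⁻¹ - (x - c) ^ 2 / 2 := by
  rw [log_mul (by positivity) (exp_ne_zero _), log_exp]
  ring

lemma gaussLogLik_eq {P : Measure ℝ} [IsProbabilityMeasure P] (hP : MemLp id 2 P) (c : ℝ) :
    gaussLogLik c P = log (√(2 * π))⁻¹ - (∫ x, x ^ 2 ∂P) / 2 + c * ∫ x, x ∂P - c ^ 2 / 2 := by
  have hx : Integrable (fun x : ℝ => c * x) P := (hP.integrable one_le_two).const_mul c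
  have hsq : Integrable (fun x : ℝ => x ^ 2 / 2) P := hP.integrable_sq.div_const 2
  have hexpand : ∀ x : ℝ, log ((√(2 * π))⁻¹ * exp (-(x - c) ^ 2 / 2))
      = (log (√(2 * π))⁻¹ - c ^ 2 / 2) + (c * x - x ^ 2 / 2) := by
    intro x; rw [log_gaussianDensity]; ring
  have hlin : Integrable (fun x : ℝ => c * x - x ^ 2 / 2) P := hx.sub hsq
  simp only [gaussLogLik, hexpand]
  rw [integral_add (integrable_const _) hlin, integral_sub hx hsq, integral_const,
    integral_const_mul, integral_div]
  simp only [probReal_univ, one_smul]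
  ring

lemma gaussLogLik_eq_sub_sq {P : Measure ℝ} [IsProbabilityMeasure P] (hP : MemLp id 2 P) (c : ℝ) :
    gaussLogLik c P = gaussLogLik (∫ x, x ∂P) P - (c - ∫ x, x ∂P) ^ 2 / 2 := by
  rw [gaussLogLik_eq hP, gaussLogLik_eq hP]
  ring

lemma integral_half_add_half {α : Type*} [MeasurableSpace α] {μ ν : Measure α} {f : α → ℝ}
    (hμ : Integrable f μ) (hν : Integrable f ν) :
    ∫ x, f x ∂((2 : ℝ≥0∞)⁻¹ • μ + (2 : ℝ≥0∞)⁻¹ • ν) = ((∫ x, f x ∂μ) + ∫ x, f x ∂ν) / 2 := by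
  rw [integral_add_measure (hμ.smul_measure (by simp)) (hν.smul_measure (by simp)),
    integral_smul_measure, integral_smul_measure]
  simp only [ENNReal.toReal_inv, ENNReal.toReal_ofNat, smul_eq_mul]
  ring

instance isProbabilityMeasure_gaussMix (θ₁ θ₂ : ℝ) : IsProbabilityMeasure (gaussMix θ₁ θ₂) := by
  constructor
  simp [gaussMix, ENNReal.inv_two_add_inv_two]

lemma memLp_id_gaussMix (θ₁ θ₂ : ℝ) : MemLp id 2 (gaussMix θ₁ θ₂) := by
  rw [memLp_two_iff_integrable_sq aestronglyMeasurable_id, gaussMix, integrable_add_measure]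
  exact ⟨(memLp_id_gaussianReal 2).integrable_sq.smul_measure (by simp),
    (memLp_id_gaussianReal 2).integrable_sq.smul_measure (by simp)⟩

lemma integral_id_gaussMix (θ₁ θ₂ : ℝ) : ∫ x, x ∂gaussMix θ₁ θ₂ = (θ₁ + θ₂) / 2 := by
  rw [gaussMix, integral_half_add_half (f := fun x => x)
    ((memLp_id_gaussianReal 1).integrable le_rfl) ((memLp_id_gaussianReal 1).integrable le_rfl),
    integral_id_gaussianReal, integral_id_gaussianReal]

lemma gaussLogLik_gaussMix (c θ₁ θ₂ : ℝ) :
    gaussLogLik c (gaussMix θ₁ θ₂)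
      = gaussLogLik ((θ₁ + θ₂) / 2) (gaussMix θ₁ θ₂) - (c - (θ₁ + θ₂) / 2) ^ 2 / 2 := by
  rw [gaussLogLik_eq_sub_sq (memLp_id_gaussMix θ₁ θ₂), integral_id_gaussMix]

/-- The limited-capacity estimator example of LBT (Section 3.2): with data distribution
`P_D = (1/2)N(−3,1) + (1/2)N(3,1)`, generators `P_θ = (1/2)N(θ₁,1) + (1/2)N(θ₂,1)` and a
single-Gaussian estimator family `{N(c,1) : c ∈ ℝ}`: (i) for each `θ` the lower-level
objective `c ↦ ∫ log φ_c dP_θ` attains a unique global maximum at `c = (θ₁+θ₂)/2`;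
(ii) the resulting upper-level objective `θ ↦ ∫ log φ_{(θ₁+θ₂)/2} dP_D` attains its global
maximum exactly at those `θ` with `θ₁ + θ₂ = 0`. -/
theorem lbt_limited_capacity_gaussian_estimator :
    -- (i) unique maximizer of the lower-level problem is the mean (θ₁+θ₂)/2
    (∀ θ₁ θ₂ c : ℝ, c ≠ (θ₁ + θ₂) / 2 →
      gaussLogLik c (gaussMix θ₁ θ₂) < gaussLogLik ((θ₁ + θ₂) / 2) (gaussMix θ₁ θ₂)) ∧
    -- (ii) the upper-level objective is globally maximal exactly when θ₁ + θ₂ = 0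
    (∀ θ₁ θ₂ : ℝ,
      (∀ θ₁' θ₂' : ℝ,
          gaussLogLik ((θ₁' + θ₂') / 2) (gaussMix (-3) 3)
            ≤ gaussLogLik ((θ₁ + θ₂) / 2) (gaussMix (-3) 3))
        ↔ θ₁ + θ₂ = 0) := by
  have hupper (c : ℝ) :
      gaussLogLik c (gaussMix (-3) 3) = gaussLogLik 0 (gaussMix (-3) 3) - c ^ 2 / 2 := by
    rw [gaussLogLik_gaussMix]; norm_num
  refine ⟨fun θ₁ θ₂ c hc => ?_, fun θ₁ θ₂ => ⟨fun hmax => ?_, fun hsum θ₁' θ₂' => ?_⟩⟩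
  · rw [gaussLogLik_gaussMix c]
    have hpos : 0 < (c - (θ₁ + θ₂) / 2) ^ 2 := sq_pos_iff.mpr (sub_ne_zero.mpr hc)
    linarith
  · have hzero := hmax 0 0
    rw [hupper, hupper ((θ₁ + θ₂) / 2)] at hzero
    nlinarith [sq_nonneg (θ₁ + θ₂)]
  · rw [hupper, hupper ((θ₁ + θ₂) / 2), hsum]
    nlinarith [sq_nonneg (θ₁' + θ₂')]
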